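/- arXiv:2401.10142 — 2 statements merged into one kernel-verified Lean document; each statement's English description precedes it below -/
import Mathlib

section
/- For every normalized observable O on ℂ^d, the revival correlator satisfies G(O) = 1 if and only if ⟨ψ_i, O ψ_j⟩ = 0 for every pair of distinct indices i, j ∈ I with i ∈ ℬ or j ∈ ℬ; equivalently, O = Σ_{i,j∈𝒜} a_{i,j}·ψ_i ψ_j* + Σ_{i∈ℬ} a_{i,i}·ψ_i ψ_i* for some coefficients a_{i,j}. -/
open Matrix Complex

noncomputable section

/-- Time-evolution unitary `U(t) = exp(-i t H)`. -/
def Uevol {d : ℕ} (H : Matrix (Fin d) (Fin d) ℂ) (t : ℝ) : Matrix (Fin d) (Fin d) ℂ :=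
  NormedSpace.exp ((-(Complex.I * (t : ℂ))) • H)

/-- Revival fidelity `F_R(ψ) = |⟨ψ, U(2πT)ψ⟩|`. -/
def FR {d : ℕ} (H : Matrix (Fin d) (Fin d) ℂ) (T : ℕ) (x : Fin d → ℂ) : ℝ :=
  ‖star x ⬝ᵥ (Uevol H (2 * Real.pi * T) *ᵥ x)‖

/-- A free pure state: a unit vector with perfect revival. -/
def IsFreeState {d : ℕ} (H : Matrix (Fin d) (Fin d) ℂ) (T : ℕ) (x : Fin d → ℂ) : Prop :=
  star x ⬝ᵥ x = 1 ∧ FR H T x = 1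

/-- A free unitary: a unitary matrix mapping every free pure state to a free pure state. -/
def IsFreeUnitary {d : ℕ} (H : Matrix (Fin d) (Fin d) ℂ) (T : ℕ)
    (V : Matrix (Fin d) (Fin d) ℂ) : Prop :=
  V ∈ Matrix.unitaryGroup (Fin d) ℂ ∧
    ∀ x : Fin d → ℂ, IsFreeState H T x → IsFreeState H T (V *ᵥ x)

/-- Normalized Hilbert-Schmidt inner product `⟨A,B⟩ = (1/d)·tr(A*B)`. -/
def hsInner {d : ℕ} (A B : Matrix (Fin d) (Fin d) ℂ) : ℂ := (Aᴴ * B).trace / (d : ℂ)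

/-- Heisenberg-evolved observable `O(2πT) = U(2πT)* O U(2πT)`. -/
def Heis {d : ℕ} (H : Matrix (Fin d) (Fin d) ℂ) (T : ℕ)
    (O : Matrix (Fin d) (Fin d) ℂ) : Matrix (Fin d) (Fin d) ℂ :=
  (Uevol H (2 * Real.pi * T))ᴴ * O * Uevol H (2 * Real.pi * T)

/-- Revival correlator `G(O) = |⟨O(2πT), O⟩|²`. -/
def Gcorr {d : ℕ} (H : Matrix (Fin d) (Fin d) ℂ) (T : ℕ)
    (O : Matrix (Fin d) (Fin d) ℂ) : ℝ :=
  ‖hsInner (Heis H T O) O‖ ^ 2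

/-- A free observable: a normalized observable with `G(O) = 1`. -/
def IsFreeObs {d : ℕ} (H : Matrix (Fin d) (Fin d) ℂ) (T : ℕ)
    (O : Matrix (Fin d) (Fin d) ℂ) : Prop :=
  O.IsHermitian ∧ hsInner O O = 1 ∧ Gcorr H T O = 1

/-!
In the eigenbasis `ψ`, conjugation by `U(2πT)` multiplies the entry `O_ij = ⟨ψ_i, O ψ_j⟩` by the
phase `exp(2πiT(E_i - E_j))`, so `⟨O(2πT), O⟩ = ∑_ij p_ij exp(2πiT(E_j - E_i))` with weights
`p_ij = |O_ij|² / d` (`eigenWeight`) summing to `‖O‖₂² = 1`. A convex combination of unit complex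
numbers has modulus one only if all the numbers carrying positive weight coincide. The phases of
`(i, j)` and `(j, i)` are conjugate and `p` is symmetric, so each phase with positive weight
squares to one, i.e. `2T(E_j - E_i) ∈ ℤ`; this is impossible when `i ≠ j` and one of them lies
in `ℬ`. Conversely all phases on the diagonal and within `𝒜` equal one.
-/

open scoped Real ComplexConjugate InnerProductSpace

namespace Matrix

theorem pow_mulVec_of_mulVec_eq_smul {n R : Type*} [Fintype n] [DecidableEq n] [CommRing R]
    {A : Matrix n n R} {v : n → R} {μ : R} (h : A *ᵥ v = μ • v) (k : ℕ) :
    (A ^ k) *ᵥ v = μ ^ k • v := by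
  induction k with
  | zero => simp
  | succ k ih => rw [pow_succ, ← mulVec_mulVec, h, mulVec_smul, ih, smul_smul, pow_succ']

open scoped Norms.Operator in
theorem exp_mulVec_of_mulVec_eq_smul {n : Type*} [Fintype n] [DecidableEq n]
    {A : Matrix n n ℂ} {v : n → ℂ} {μ : ℂ} (h : A *ᵥ v = μ • v) :
    NormedSpace.exp A *ᵥ v = exp μ • v := by
  have hA := (NormedSpace.exp_series_hasSum_exp' (𝕂 := ℂ) A).map
    (mulVec.addMonoidHomLeft v) (continuous_id.matrix_mulVec continuous_const)
  have hμ := (NormedSpace.exp_series_hasSum_exp' (𝕂 := ℂ) μ).smul_const v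
  rw [exp_eq_exp_ℂ]
  refine hA.unique ?_
  convert hμ using 1
  funext k
  simp [mulVec.addMonoidHomLeft, smul_mulVec, pow_mulVec_of_mulVec_eq_smul h, smul_smul]

theorem trace_conjTranspose_mul_eq_sum {n : Type*} [Fintype n] (M N : Matrix n n ℂ) :
    (Mᴴ * N).trace = ∑ i, ∑ j, star (M i j) * N i j := by
  simp only [trace, diag_apply, mul_apply, conjTranspose_apply]
  exact Finset.sum_comm

theorem IsHermitian.star_dotProduct_mulVec {n : Type*} [Fintype n] {O : Matrix n n ℂ}
    (hO : O.IsHermitian) (v w : n → ℂ) :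
    star (star v ⬝ᵥ (O *ᵥ w)) = star w ⬝ᵥ (O *ᵥ v) := by
  rw [star_dotProduct, star_star, star_mulVec, ← dotProduct_mulVec, hO.eq]

end Matrix

section OrthonormalBasis

variable {n : Type*} [Fintype n] {ψ : n → n → ℂ}

theorem conjTranspose_mul_self_of_orthonormal [DecidableEq n]
    (horth : ∀ i j, star (ψ i) ⬝ᵥ ψ j = if i = j then 1 else 0) :
    ((of ψ)ᵀ)ᴴ * (of ψ)ᵀ = 1 := by
  ext i j
  simpa [mul_apply, one_apply, dotProduct] using horth i j

theorem conjTranspose_mul_mul_apply_of (X : Matrix n n ℂ) (i j : n) :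
    (((of ψ)ᵀ)ᴴ * X * (of ψ)ᵀ) i j = star (ψ i) ⬝ᵥ (X *ᵥ ψ j) := by
  simp only [mul_apply, dotProduct, mulVec, conjTranspose_apply, transpose_apply, of_apply,
    Finset.mul_sum, Finset.sum_mul, mul_assoc, Pi.star_apply]
  exact Finset.sum_comm

theorem trace_conjTranspose_mul_eq_sum_of_orthonormal [DecidableEq n]
    (horth : ∀ i j, star (ψ i) ⬝ᵥ ψ j = if i = j then 1 else 0) (X Y : Matrix n n ℂ) :
    (Xᴴ * Y).trace =
      ∑ i, ∑ j, star (star (ψ i) ⬝ᵥ (X *ᵥ ψ j)) * (star (ψ i) ⬝ᵥ (Y *ᵥ ψ j)) := by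
  simp only [← conjTranspose_mul_mul_apply_of, ← trace_conjTranspose_mul_eq_sum]
  set P := (of ψ)ᵀ
  have hPP : P * Pᴴ = 1 := mul_eq_one_comm.1 (conjTranspose_mul_self_of_orthonormal horth)
  have hconj : (Pᴴ * X * P)ᴴ * (Pᴴ * Y * P) = Pᴴ * (Xᴴ * Y) * P := by
    simp only [conjTranspose_mul, conjTranspose_conjTranspose, Matrix.mul_assoc]
    rw [← Matrix.mul_assoc P, hPP, Matrix.one_mul]
  rw [hconj, trace_mul_cycle, hPP, Matrix.one_mul]

end OrthonormalBasis

theorem eq_of_norm_sum_smul_eq_one {F ι : Type*} [NormedAddCommGroup F] [InnerProductSpace ℝ F]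
    {s : Finset ι} {p : ι → ℝ} {c : ι → F} (hp : ∀ k ∈ s, 0 ≤ p k) (hp1 : ∑ k ∈ s, p k = 1)
    (hc : ∀ k ∈ s, ‖c k‖ = 1) (hz : ‖∑ k ∈ s, p k • c k‖ = 1) {k : ι} (hk : k ∈ s)
    (hpk : p k ≠ 0) : ∑ k ∈ s, p k • c k = c k := by
  set z := ∑ k ∈ s, p k • c k
  have hle : ∀ k ∈ s, ⟪z, c k⟫_ℝ ≤ 1 := fun k hk => real_inner_le_one_of_norm_eq_one hz (hc k hk)
  have hsum : ∑ k ∈ s, p k * (1 - ⟪z, c k⟫_ℝ) = 0 := by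
    have hzz : ∑ k ∈ s, p k * ⟪z, c k⟫_ℝ = 1 := by
      have hzz_self : ⟪z, z⟫_ℝ = 1 := by rw [real_inner_self_eq_norm_sq, hz, one_pow]
      simpa only [z, inner_sum, real_inner_smul_right] using hzz_self
    simp only [mul_sub, mul_one, Finset.sum_sub_distrib, hp1, hzz, sub_self]
  have hterm := (Finset.sum_eq_zero_iff_of_nonneg fun k hk =>
    mul_nonneg (hp k hk) (sub_nonneg.2 (hle k hk))).1 hsum k hk
  have hinner : ⟪z, c k⟫_ℝ = 1 := by
    linarith [(mul_eq_zero.1 hterm).resolve_left hpk]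
  exact (inner_eq_one_iff_of_norm_eq_one hz (hc k hk)).1 hinner

theorem exp_mul_I_sq_eq_one_of_norm_sum_smul_eq_one {ι : Type*} [Fintype ι] {p φ : ι × ι → ℝ}
    (hp : ∀ k, 0 ≤ p k) (hp1 : ∑ k, p k = 1) (hp_symm : ∀ i j, p (j, i) = p (i, j))
    (hφ : ∀ i j, φ (j, i) = -φ (i, j)) (hz : ‖∑ k, p k • exp (φ k * I)‖ = 1) {i j : ι}
    (hij : p (i, j) ≠ 0) :
    exp (φ (i, j) * I) ^ 2 = 1 := by
  have hc : ∀ k ∈ Finset.univ, ‖exp (φ k * I)‖ = 1 := fun k _ => norm_exp_ofReal_mul_I _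
  have h_ij := eq_of_norm_sum_smul_eq_one (fun k _ => hp k) hp1 hc hz (Finset.mem_univ _) hij
  have h_ji := eq_of_norm_sum_smul_eq_one (fun k _ => hp k) hp1 hc hz (Finset.mem_univ (j, i))
    (hp_symm i j ▸ hij)
  calc exp (φ (i, j) * I) ^ 2 = exp (φ (i, j) * I) * exp (φ (j, i) * I) := by
        rw [sq, ← h_ij, h_ji]
    _ = 1 := by rw [← exp_add, hφ i j, ofReal_neg, neg_mul, add_neg_cancel, exp_zero]

theorem exp_two_pi_mul_sq_ne_one {T : ℕ} (hT : T ≠ 0) {x : ℝ} (hx : Irrational x) :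
    exp ((2 * π * T * x : ℝ) * I) ^ 2 ≠ 1 := by
  rw [← exp_nat_mul, Ne, exp_eq_one_iff]
  rintro ⟨n, hn⟩
  have h : ((2 * T * x : ℝ) : ℂ) * (2 * π * I) = n * (2 * π * I) := by
    push_cast at hn ⊢
    linear_combination hn
  exact (hx.natCast_mul (by positivity : 2 * T ≠ 0)).ne_int n
    (by exact_mod_cast mul_right_cancel₀ two_pi_I_ne_zero h)

theorem exp_two_pi_mul_sub_eq_one {T : ℕ} {a b : ℝ} (ha : ∃ m : ℤ, a * T = m)
    (hb : ∃ m : ℤ, b * T = m) :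
    exp ((2 * π * T * (b - a) : ℝ) * I) = 1 := by
  obtain ⟨m, hm⟩ := ha
  obtain ⟨n, hn⟩ := hb
  have h : 2 * π * T * (b - a) = (n - m : ℤ) * (2 * π) := by
    push_cast
    linear_combination 2 * π * (hn - hm)
  rw [h, ofReal_mul, mul_assoc, ofReal_intCast, ← exp_int_mul_two_pi_mul_I (n - m)]
  push_cast
  ring

theorem irrational_sub_of_mem_right {ι : Type*} {A B : Finset ι} {E : ι → ℝ} {T : ℕ} (hT : T ≠ 0)
    (hAB : ∀ k, k ∈ A ∨ k ∈ B) (hArat : ∀ i ∈ A, ∃ m : ℤ, E i * T = m)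
    (hBirr : ∀ i ∈ B, Irrational (E i))
    (hBdiff : ∀ i ∈ B, ∀ j ∈ B, i ≠ j → Irrational (E i - E j)) {i j : ι} (hij : i ≠ j)
    (hj : j ∈ B) :
    Irrational (E i - E j) := by
  rcases hAB i with hi | hi
  · obtain ⟨m, hm⟩ := hArat i hi
    refine .of_natCast_mul T ?_
    rw [mul_sub, mul_comm, hm]
    exact (hBirr j hj).natCast_mul hT |>.intCast_sub m
  · exact hBdiff i hi j hj hij

theorem Uevol_mulVec_of_mulVec_eq_smul {d : ℕ} {H : Matrix (Fin d) (Fin d) ℂ} {v : Fin d → ℂ}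
    {e : ℝ} (h : H *ᵥ v = (e : ℂ) • v) (t : ℝ) :
    Uevol H t *ᵥ v = exp (-(I * t) * e) • v :=
  exp_mulVec_of_mulVec_eq_smul (by rw [smul_mulVec, h, smul_smul])

theorem star_dotProduct_Heis_mulVec {d : ℕ} {H : Matrix (Fin d) (Fin d) ℂ} {v w : Fin d → ℂ}
    {a b : ℝ} (hv : H *ᵥ v = (a : ℂ) • v) (hw : H *ᵥ w = (b : ℂ) • w) (T : ℕ)
    (O : Matrix (Fin d) (Fin d) ℂ) :
    star v ⬝ᵥ (Heis H T O *ᵥ w) =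
      exp ((2 * π * T * (a - b) : ℝ) * I) * (star v ⬝ᵥ (O *ᵥ w)) := by
  rw [Heis, ← mulVec_mulVec, ← mulVec_mulVec, dotProduct_mulVec, ← star_mulVec,
    Uevol_mulVec_of_mulVec_eq_smul hv, Uevol_mulVec_of_mulVec_eq_smul hw, star_smul, mulVec_smul,
    smul_dotProduct, dotProduct_smul, smul_eq_mul, smul_eq_mul, ← mul_assoc, star_def, ← exp_conj,
    ← exp_add]
  congr 2
  simp only [map_mul, map_neg, conj_I, conj_ofReal]
  push_cast
  ring

section Eigenbasis

variable {d : ℕ} {ψ : Fin d → Fin d → ℂ}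

def eigenWeight (ψ : Fin d → Fin d → ℂ) (O : Matrix (Fin d) (Fin d) ℂ) (k : Fin d × Fin d) : ℝ :=
  normSq (star (ψ k.1) ⬝ᵥ (O *ᵥ ψ k.2)) / d

theorem eigenWeight_nonneg (O : Matrix (Fin d) (Fin d) ℂ) (k : Fin d × Fin d) :
    0 ≤ eigenWeight ψ O k :=
  div_nonneg (normSq_nonneg _) d.cast_nonneg

theorem eigenWeight_eq_zero_iff {O : Matrix (Fin d) (Fin d) ℂ} {i j : Fin d} :
    eigenWeight ψ O (i, j) = 0 ↔ star (ψ i) ⬝ᵥ (O *ᵥ ψ j) = 0 := by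
  rw [eigenWeight, div_eq_zero_iff, normSq_eq_zero, or_iff_left (Nat.cast_ne_zero.2 i.pos.ne')]

theorem eigenWeight_swap {O : Matrix (Fin d) (Fin d) ℂ} (hO : O.IsHermitian) (i j : Fin d) :
    eigenWeight ψ O (j, i) = eigenWeight ψ O (i, j) := by
  rw [eigenWeight, eigenWeight, ← hO.star_dotProduct_mulVec (ψ i) (ψ j), star_def, normSq_conj]

theorem hsInner_self_eq_sum_eigenWeight
    (horth : ∀ i j, star (ψ i) ⬝ᵥ ψ j = if i = j then 1 else 0) (O : Matrix (Fin d) (Fin d) ℂ) :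
    hsInner O O = ((∑ k, eigenWeight ψ O k : ℝ) : ℂ) := by
  rw [hsInner, trace_conjTranspose_mul_eq_sum_of_orthonormal horth, ← Fintype.sum_prod_type',
    Finset.sum_div]
  simp only [eigenWeight, ofReal_sum, ofReal_div, ofReal_natCast, star_def,
    ← normSq_eq_conj_mul_self]

theorem hsInner_Heis_self_eq_sum_eigenWeight
    (horth : ∀ i j, star (ψ i) ⬝ᵥ ψ j = if i = j then 1 else 0)
    {H : Matrix (Fin d) (Fin d) ℂ} {E : Fin d → ℝ} (heig : ∀ i, H *ᵥ ψ i = (E i : ℂ) • ψ i)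
    (T : ℕ) (O : Matrix (Fin d) (Fin d) ℂ) :
    hsInner (Heis H T O) O =
      ∑ k, eigenWeight ψ O k • exp ((2 * π * T * (E k.2 - E k.1) : ℝ) * I) := by
  rw [hsInner, trace_conjTranspose_mul_eq_sum_of_orthonormal horth, ← Fintype.sum_prod_type',
    Finset.sum_div]
  refine Finset.sum_congr rfl fun k _ => ?_
  have hphase : conj (((2 * π * T * (E k.1 - E k.2) : ℝ) : ℂ) * I) =
      ((2 * π * T * (E k.2 - E k.1) : ℝ) : ℂ) * I := by
    rw [map_mul, conj_ofReal, conj_I]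
    push_cast
    ring
  rw [star_dotProduct_Heis_mulVec (heig k.1) (heig k.2), star_mul', star_def, ← exp_conj,
    hphase, mul_assoc, ← normSq_eq_conj_mul_self, real_smul, eigenWeight]
  push_cast
  ring

end Eigenbasis

theorem free_observable_characterization_general
    (d : ℕ)
    (H : Matrix (Fin d) (Fin d) ℂ)
    (ψ : Fin d → Fin d → ℂ) (E : Fin d → ℝ)
    (horth : ∀ i j : Fin d, star (ψ i) ⬝ᵥ ψ j = if i = j then 1 else 0)
    (heig : ∀ i : Fin d, H *ᵥ ψ i = (E i : ℂ) • ψ i)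
    (T : ℕ) (hT : 0 < T)
    (A B : Finset (Fin d))
    (hcover : A ∪ B = Finset.univ)
    (hArat : ∀ i ∈ A, ∃ m : ℤ, E i * (T : ℝ) = (m : ℝ))
    (hBirr : ∀ i ∈ B, Irrational (E i))
    (hBdiff : ∀ i ∈ B, ∀ j ∈ B, i ≠ j → Irrational (E i - E j))
    (O : Matrix (Fin d) (Fin d) ℂ) (hO : O.IsHermitian) (hnorm : hsInner O O = 1) :
    Gcorr H T O = 1 ↔
      ∀ i j : Fin d, i ≠ j → (i ∈ B ∨ j ∈ B) → star (ψ i) ⬝ᵥ (O *ᵥ ψ j) = 0 := by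
  have hAB : ∀ k, k ∈ A ∨ k ∈ B := fun k => Finset.mem_union.1 (hcover ▸ Finset.mem_univ k)
  have hp1 : ∑ k, eigenWeight ψ O k = 1 := by
    exact_mod_cast (hsInner_self_eq_sum_eigenWeight horth O).symm.trans hnorm
  rw [Gcorr, hsInner_Heis_self_eq_sum_eigenWeight horth heig,
    pow_eq_one_iff_of_nonneg (norm_nonneg _) two_ne_zero]
  constructor
  · intro hz i j hij hB
    by_contra hOij
    refine exp_two_pi_mul_sq_ne_one hT.ne' ?_ (exp_mul_I_sq_eq_one_of_norm_sum_smul_eq_one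
      (eigenWeight_nonneg O) hp1 (eigenWeight_swap hO) (fun i j => by ring) hz
      (eigenWeight_eq_zero_iff.not.2 hOij))
    rcases hB with hi | hj
    · exact irrational_sub_of_mem_right hT.ne' hAB hArat hBirr hBdiff hij.symm hi
    · simpa using (irrational_sub_of_mem_right hT.ne' hAB hArat hBirr hBdiff hij hj).neg
  · intro hoff
    have hterm : ∀ k, eigenWeight ψ O k • exp ((2 * π * T * (E k.2 - E k.1) : ℝ) * I) =
        eigenWeight ψ O k := by
      rintro ⟨i, j⟩
      rcases eq_or_ne i j with rfl | hij
      · simp [real_smul]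
      by_cases hB : i ∈ B ∨ j ∈ B
      · simp [eigenWeight_eq_zero_iff.2 (hoff i j hij hB)]
      · rw [not_or] at hB
        rw [exp_two_pi_mul_sub_eq_one (hArat i ((hAB i).resolve_right hB.1))
          (hArat j ((hAB j).resolve_right hB.2)), real_smul, mul_one]
    simp only [hterm, ← ofReal_sum, hp1, ofReal_one, norm_one]

theorem free_observable_characterization
    (d : ℕ) (hd : 2 ≤ d)
    (H : Matrix (Fin d) (Fin d) ℂ) (hH : H.IsHermitian)
    (ψ : Fin d → Fin d → ℂ) (E : Fin d → ℝ)
    (horth : ∀ i j : Fin d, star (ψ i) ⬝ᵥ ψ j = if i = j then 1 else 0)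
    (heig : ∀ i : Fin d, H *ᵥ ψ i = (E i : ℂ) • ψ i)
    (T : ℕ) (hT : 0 < T)
    (A B : Finset (Fin d))
    (hdisj : Disjoint A B) (hcover : A ∪ B = Finset.univ)
    (hArat : ∀ i ∈ A, ∃ m : ℤ, E i * (T : ℝ) = (m : ℝ))
    (hBirr : ∀ i ∈ B, Irrational (E i))
    (hBdiff : ∀ i ∈ B, ∀ j ∈ B, i ≠ j → Irrational (E i - E j))
    (hAcard : 1 < A.card) (hBcard : 1 < B.card)
    (O : Matrix (Fin d) (Fin d) ℂ) (hO : O.IsHermitian) (hnorm : hsInner O O = 1) :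
    Gcorr H T O = 1 ↔
      ∀ i j : Fin d, i ≠ j → (i ∈ B ∨ j ∈ B) → star (ψ i) ⬝ᵥ (O *ᵥ ψ j) = 0 :=
  free_observable_characterization_general d H ψ E horth heig T hT A B hcover hArat hBirr hBdiff O
    hO hnorm
end
end

section
/- Let d = 2^n and let O₁ be an n-qubit Pauli operator. Then the out-of-time-ordered correlator OTOC(O₁, O₁; U(2πT)) = (1/d)·tr(U(2πT)*O₁U(2πT)·O₁·U(2πT)*O₁U(2πT)·O₁) is a real number satisfying 1 − 2·𝒢(O₁) ≤ OTOC(O₁, O₁; U(2πT)) ≤ 1. -/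
open Matrix Complex

noncomputable section

/-- Observable non-revival monotone `𝒢(O) = sup over free unitaries V of (1 - G(V* O V))`. -/
def Gmono {d : ℕ} (H : Matrix (Fin d) (Fin d) ℂ) (T : ℕ)
    (O : Matrix (Fin d) (Fin d) ℂ) : ℝ :=
  ⨆ V : {V : Matrix (Fin d) (Fin d) ℂ // IsFreeUnitary H T V},
    (1 - Gcorr H T (V.1ᴴ * O * V.1))

/-- The four 1-qubit Pauli matrices `I₂, σx, σy, σz`. -/
def pauliMat : Fin 4 → Matrix (Fin 2) (Fin 2) ℂ :=
  ![1, !![0, 1; 1, 0], !![0, -Complex.I; Complex.I, 0], !![1, 0; 0, -1]]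

/-- The n-fold Kronecker product `P₁ ⊗ ⋯ ⊗ Pₙ` of 2×2 matrices, as a `2^n × 2^n` matrix. -/
def pauliString {n : ℕ} (P : Fin n → Matrix (Fin 2) (Fin 2) ℂ) :
    Matrix (Fin (2 ^ n)) (Fin (2 ^ n)) ℂ :=
  Matrix.of fun x y =>
    ∏ k : Fin n, P k (finFunctionFinEquiv.symm x k) (finFunctionFinEquiv.symm y k)

/-- An n-qubit Pauli operator: a Kronecker product of 1-qubit Pauli matrices. -/
def IsPauli {n : ℕ} (O : Matrix (Fin (2 ^ n)) (Fin (2 ^ n)) ℂ) : Prop :=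
  ∃ P : Fin n → Matrix (Fin 2) (Fin 2) ℂ,
    (∀ k, ∃ a : Fin 4, P k = pauliMat a) ∧ O = pauliString P

/-! With `W = U(2πT)* O₁ U(2πT)`, both `W` and `O₁` are Hermitian involutions, so `X = W O₁` is
unitary, `tr X` is real, `G(O₁) = (tr X / d)²`, and the OTOC is `tr (X²) / d`; unitarity of `X²`
gives the upper bound. For the lower bound, the identity is a free unitary, so
`𝒢(O₁) ≥ 1 - G(O₁)`, and Cauchy–Schwarz `(tr S)² ≤ d · tr (S²)` for the Hermitian matrix
`S = X + X*` reads `2 (tr X)² ≤ d (tr (X²) + d)`. -/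

section Pauli

lemma pauliMat_isHermitian (a : Fin 4) : (pauliMat a).IsHermitian := by
  fin_cases a <;>
    · ext i j
      fin_cases i <;> fin_cases j <;> simp [pauliMat, conjTranspose_apply, one_apply]

lemma pauliMat_mul_self (a : Fin 4) : pauliMat a * pauliMat a = 1 := by
  fin_cases a <;> simp [pauliMat, one_fin_two, I_mul_I]

variable {n : ℕ}

lemma pauliString_mul (P Q : Fin n → Matrix (Fin 2) (Fin 2) ℂ) :
    pauliString P * pauliString Q = pauliString (fun k => P k * Q k) := by
  ext x y
  rw [mul_apply, ← Equiv.sum_comp finFunctionFinEquiv]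
  simp only [pauliString, of_apply, Equiv.symm_apply_apply, mul_apply]
  rw [Fintype.prod_sum fun k a => P k (finFunctionFinEquiv.symm x k) a * Q k a
    (finFunctionFinEquiv.symm y k)]
  simp only [Finset.prod_mul_distrib]

lemma pauliString_one : pauliString (fun _ : Fin n => (1 : Matrix (Fin 2) (Fin 2) ℂ)) = 1 := by
  ext x y
  simp [pauliString, one_apply, Finset.prod_boole, ← funext_iff]

lemma pauliString_conjTranspose (P : Fin n → Matrix (Fin 2) (Fin 2) ℂ) :
    (pauliString P)ᴴ = pauliString (fun k => (P k)ᴴ) := by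
  ext x y
  simp [pauliString, conjTranspose_apply]

lemma IsPauli.isHermitian {O : Matrix (Fin (2 ^ n)) (Fin (2 ^ n)) ℂ} (hO : IsPauli O) :
    O.IsHermitian := by
  obtain ⟨P, hP, rfl⟩ := hO
  rw [IsHermitian, pauliString_conjTranspose]
  congr 1
  funext k
  obtain ⟨a, ha⟩ := hP k
  rw [ha, (pauliMat_isHermitian a).eq]

lemma IsPauli.mul_self {O : Matrix (Fin (2 ^ n)) (Fin (2 ^ n)) ℂ} (hO : IsPauli O) :
    O * O = 1 := by
  obtain ⟨P, hP, rfl⟩ := hO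
  rw [pauliString_mul, ← pauliString_one]
  congr 1
  funext k
  obtain ⟨a, ha⟩ := hP k
  rw [ha, pauliMat_mul_self]

lemma IsPauli.mem_unitaryGroup {O : Matrix (Fin (2 ^ n)) (Fin (2 ^ n)) ℂ} (hO : IsPauli O) :
    O ∈ unitaryGroup (Fin (2 ^ n)) ℂ := by
  rw [mem_unitaryGroup_iff, star_eq_conjTranspose, hO.isHermitian.eq, hO.mul_self]

end Pauli

section Trace

variable {m : Type*} [Fintype m]

lemma im_trace_mul_eq_zero_of_isHermitian {A B : Matrix m m ℂ} (hA : A.IsHermitian)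
    (hB : B.IsHermitian) : (A * B).trace.im = 0 := by
  rw [← conj_eq_iff_im, ← star_def, ← trace_conjTranspose, conjTranspose_mul, hA.eq, hB.eq,
    trace_mul_comm]

lemma sq_re_trace_le_card_mul_re_trace_conjTranspose_mul_self (S : Matrix m m ℂ) :
    S.trace.re ^ 2 ≤ Fintype.card m * (Sᴴ * S).trace.re := by
  calc S.trace.re ^ 2 = (∑ i, (S i i).re) ^ 2 := by simp [trace, re_sum]
    _ ≤ Fintype.card m * ∑ i, (S i i).re ^ 2 := sq_sum_le_card_mul_sum_sq
    _ ≤ Fintype.card m * ∑ i, ∑ j, normSq (S j i) := by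
      gcongr with i
      rw [sq]
      exact (re_sq_le_normSq _).trans <|
        Finset.single_le_sum (f := fun j => normSq (S j i)) (fun j _ => normSq_nonneg _)
          (Finset.mem_univ i)
    _ = Fintype.card m * (Sᴴ * S).trace.re := by
      simp [trace, mul_apply, re_sum, normSq_apply]

variable [DecidableEq m]

lemma re_trace_le_card_of_mem_unitaryGroup {X : Matrix m m ℂ} (hX : X ∈ unitaryGroup m ℂ) :
    X.trace.re ≤ Fintype.card m := by
  calc X.trace.re = ∑ i, (X i i).re := by simp [trace, re_sum]
    _ ≤ ∑ _i : m, (1 : ℝ) :=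
      Finset.sum_le_sum fun i _ => (re_le_norm _).trans (entry_norm_bound_of_unitary hX i i)
    _ = Fintype.card m := by simp

-- Cauchy–Schwarz for `X + Xᴴ`, whose square has trace `2 re tr (X²) + 2 card m`.
lemma two_mul_sq_re_trace_le_of_mem_unitaryGroup {X : Matrix m m ℂ}
    (hX : X ∈ unitaryGroup m ℂ) :
    2 * X.trace.re ^ 2 ≤ Fintype.card m * ((X * X).trace.re + Fintype.card m) := by
  have h := sq_re_trace_le_card_mul_re_trace_conjTranspose_mul_self (X + Xᴴ)
  have hXX : Xᴴ * X = 1 := mem_unitaryGroup_iff'.mp hX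
  have hXX' : X * Xᴴ = 1 := mem_unitaryGroup_iff.mp hX
  simp only [conjTranspose_add, conjTranspose_conjTranspose, add_mul, mul_add, trace_add,
    add_re, trace_conjTranspose, star_def, conj_re, ← conjTranspose_mul, hXX, hXX',
    trace_one, natCast_re] at h
  nlinarith

end Trace

section Revival

variable {d : ℕ} {H : Matrix (Fin d) (Fin d) ℂ}

lemma Uevol_mem_unitaryGroup (hH : H.IsHermitian) (t : ℝ) :
    Uevol H t ∈ unitaryGroup (Fin d) ℂ := by
  set A := (-(I * (t : ℂ))) • H
  have hA : star A = -A := by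
    rw [star_smul, star_eq_conjTranspose, hH.eq, ← neg_smul]
    congr 1
    simp
  have hstar : star (Uevol H t) = NormedSpace.exp (-A) := by
    rw [Uevol, star_eq_conjTranspose, ← exp_conjTranspose, ← star_eq_conjTranspose, hA]
  rw [Unitary.mem_iff, hstar, Uevol, ← exp_add_of_commute _ _ (Commute.refl A).neg_left,
    ← exp_add_of_commute _ _ (Commute.refl A).neg_right, neg_add_cancel, add_neg_cancel,
    NormedSpace.exp_zero, and_self]

lemma Heis_isHermitian (T : ℕ) {O : Matrix (Fin d) (Fin d) ℂ} (hO : O.IsHermitian) :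
    (Heis H T O).IsHermitian :=
  isHermitian_conjTranspose_mul_mul _ hO

lemma Heis_mem_unitaryGroup (hH : H.IsHermitian) (T : ℕ) {O : Matrix (Fin d) (Fin d) ℂ}
    (hO : O ∈ unitaryGroup (Fin d) ℂ) : Heis H T O ∈ unitaryGroup (Fin d) ℂ :=
  have hU := Uevol_mem_unitaryGroup hH (2 * Real.pi * T)
  mul_mem (mul_mem (Unitary.star_mem hU) hO) hU

lemma Gcorr_eq_sq_re_trace_div (T : ℕ) {O : Matrix (Fin d) (Fin d) ℂ} (hO : O.IsHermitian) :
    Gcorr H T O = ((Heis H T O * O).trace.re / d) ^ 2 := by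
  have hW := Heis_isHermitian (H := H) T hO
  have hre : (Heis H T O * O).trace = ((Heis H T O * O).trace.re : ℂ) :=
    ext rfl (by simp [im_trace_mul_eq_zero_of_isHermitian hW hO])
  rw [Gcorr, hsInner, hW.eq, hre, ← ofReal_natCast, ← ofReal_div, norm_real, Real.norm_eq_abs,
    sq_abs, ofReal_re]

lemma isFreeUnitary_one (T : ℕ) : IsFreeUnitary H T 1 :=
  ⟨one_mem _, fun x hx => by simpa using hx⟩

lemma one_sub_Gcorr_le_Gmono (T : ℕ) (O : Matrix (Fin d) (Fin d) ℂ) :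
    1 - Gcorr H T O ≤ Gmono H T O := by
  have hbdd : BddAbove (Set.range fun V : {V // IsFreeUnitary H T V} =>
      1 - Gcorr H T (V.1ᴴ * O * V.1)) := by
    refine ⟨1, ?_⟩
    rintro _ ⟨V, rfl⟩
    simp [Gcorr]
  simpa [Gmono] using le_ciSup hbdd ⟨1, isFreeUnitary_one T⟩

end Revival

theorem otoc_bounded_by_observable_monotone_general
    (n : ℕ)
    (H : Matrix (Fin (2 ^ n)) (Fin (2 ^ n)) ℂ) (hH : H.IsHermitian)
    (T : ℕ)
    (O₁ : Matrix (Fin (2 ^ n)) (Fin (2 ^ n)) ℂ) (hO₁ : IsPauli O₁) :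
    ((Heis H T O₁ * O₁ * Heis H T O₁ * O₁).trace / ((2 ^ n : ℕ) : ℂ)).im = 0 ∧
    1 - 2 * Gmono H T O₁ ≤
      ((Heis H T O₁ * O₁ * Heis H T O₁ * O₁).trace / ((2 ^ n : ℕ) : ℂ)).re ∧
    ((Heis H T O₁ * O₁ * Heis H T O₁ * O₁).trace / ((2 ^ n : ℕ) : ℂ)).re ≤ 1 := by
  set W := Heis H T O₁
  have hO := hO₁.isHermitian
  have hW : W.IsHermitian := Heis_isHermitian T hO
  have hX : W * O₁ ∈ unitaryGroup _ ℂ :=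
    mul_mem (Heis_mem_unitaryGroup hH T hO₁.mem_unitaryGroup) hO₁.mem_unitaryGroup
  have hOWO : (O₁ * W * O₁).IsHermitian := by
    simpa [hO.eq] using isHermitian_conjTranspose_mul_mul O₁ hW
  have hassoc : W * O₁ * W * O₁ = W * (O₁ * W * O₁) := by simp only [mul_assoc]
  have hsq : W * O₁ * W * O₁ = W * O₁ * (W * O₁) := by simp only [mul_assoc]
  have hD : (0 : ℝ) < (2 ^ n : ℕ) := by positivity
  have hCS := two_mul_sq_re_trace_le_of_mem_unitaryGroup hX
  have hle := re_trace_le_card_of_mem_unitaryGroup (mul_mem hX hX)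
  rw [Fintype.card_fin] at hCS hle
  have hG := Gcorr_eq_sq_re_trace_div (H := H) T hO
  have hmono := one_sub_Gcorr_le_Gmono (H := H) T O₁
  rw [div_natCast_im, div_natCast_re, hassoc, im_trace_mul_eq_zero_of_isHermitian hW hOWO,
    ← hassoc, hsq]
  refine ⟨zero_div _, ?_, (div_le_one hD).mpr hle⟩
  rw [hG] at hmono
  calc 1 - 2 * Gmono H T O₁ ≤ 2 * ((W * O₁).trace.re / (2 ^ n : ℕ)) ^ 2 - 1 := by linarith
    _ ≤ (W * O₁ * (W * O₁)).trace.re / (2 ^ n : ℕ) := by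
      rw [div_pow, sub_le_iff_le_add, div_add_one hD.ne', mul_div_assoc', sq,
        div_le_div_iff₀ (by positivity) hD]
      nlinarith

theorem otoc_bounded_by_observable_monotone
    (n : ℕ) (hn : 1 ≤ n)
    (H : Matrix (Fin (2 ^ n)) (Fin (2 ^ n)) ℂ) (hH : H.IsHermitian)
    (ψ : Fin (2 ^ n) → Fin (2 ^ n) → ℂ) (E : Fin (2 ^ n) → ℝ)
    (horth : ∀ i j : Fin (2 ^ n), star (ψ i) ⬝ᵥ ψ j = if i = j then 1 else 0)
    (heig : ∀ i : Fin (2 ^ n), H *ᵥ ψ i = (E i : ℂ) • ψ i)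
    (T : ℕ) (hT : 0 < T)
    (A B : Finset (Fin (2 ^ n)))
    (hdisj : Disjoint A B) (hcover : A ∪ B = Finset.univ)
    (hArat : ∀ i ∈ A, ∃ m : ℤ, E i * (T : ℝ) = (m : ℝ))
    (hBirr : ∀ i ∈ B, Irrational (E i))
    (hBdiff : ∀ i ∈ B, ∀ j ∈ B, i ≠ j → Irrational (E i - E j))
    (hAcard : 1 < A.card) (hBcard : 1 < B.card)
    (O₁ : Matrix (Fin (2 ^ n)) (Fin (2 ^ n)) ℂ) (hO₁ : IsPauli O₁) :
    ((Heis H T O₁ * O₁ * Heis H T O₁ * O₁).trace / ((2 ^ n : ℕ) : ℂ)).im = 0 ∧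
    1 - 2 * Gmono H T O₁ ≤
      ((Heis H T O₁ * O₁ * Heis H T O₁ * O₁).trace / ((2 ^ n : ℕ) : ℂ)).re ∧
    ((Heis H T O₁ * O₁ * Heis H T O₁ * O₁).trace / ((2 ^ n : ℕ) : ℂ)).re ≤ 1 :=
  otoc_bounded_by_observable_monotone_general n H hH T O₁ hO₁
end
end
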